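/- Let 𝔸 = (A, ≤, →, Σ) be an implicative algebra with |A| < κ for a strongly inaccessible cardinal κ, and let W, ∈_W, =_W and the interpretation ‖·‖ be as defined below. Then W validates the Infinity axiom: ‖∃u (Inf₁(u) ∧ Inf₂(u))‖ ∈ Σ, where Inf₁(u) is ∃x∈u ∀y∈x ⊥ and Inf₂(u) is ∀x∈u ∃y∈u (x ⊆ y ∧ x ∈ y ∧ ∀z∈y (z ∈ x ∨ z = x)); here ∃x∈u φ abbreviates ∃x(x ∈ u ∧ φ), ∀x∈u φ abbreviates ∀x(x ∈ u → φ), and x ⊆ y abbreviates ∀z(z ∈ x → z ∈ y). -/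

import Mathlib

/-!
`ω` is named by `{(n, ⊤) | n ∈ ℕ}`, where the numerals are `0 = ∅` and
`n + 1 = {(m, ‖m ∈ n ∨ m = n‖) | m ≤ n}`, and `0` witnesses `Inf₁`. For `Inf₂`, an element of
`ω` is equal to some numeral `n`, and `n + 1` is the required successor.

Realizers are written as λ-terms: by bracket abstraction into `K` and `S`, a closed λ-term
with constants in `Σ` evaluates into `Σ`, and its value lies below every truth value it is
"typed" by. Reflexivity and transitivity of `=_W`, and the inclusion `n ⊆ n + 1`, need
recursive realizers; these come from Turing's fixed-point combinator, justified by
well-founded induction on rank.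
-/

universe u

/-- An implicative algebra `𝔸 = (A, ≤, →, Σ)`:  a complete lattice `(A, ≤)` together with an
implication `imp` which is antitone in its first argument, monotone in its second argument and
turns infima in the second argument into infima, and a separator `Sig ⊆ A` which is upward
closed, closed under modus ponens and contains the combinators `K` and `S`. -/
structure ImplicativeAlgebra (A : Type u) [CompleteLattice A] where
  imp : A → A → A
  imp_antitone : ∀ ⦃a a' b : A⦄, a ≤ a' → imp a' b ≤ imp a b
  imp_monotone : ∀ ⦃a b b' : A⦄, b ≤ b' → imp a b ≤ imp a b'
  imp_sInf : ∀ (a : A) (S : Set A), imp a (sInf S) = ⨅ b ∈ S, imp a b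
  Sig : Set A
  Sig_upward : ∀ ⦃a b : A⦄, a ∈ Sig → a ≤ b → b ∈ Sig
  Sig_mp : ∀ ⦃a b : A⦄, imp a b ∈ Sig → a ∈ Sig → b ∈ Sig
  Sig_K : (⨅ a : A, ⨅ b : A, imp a (imp b a)) ∈ Sig
  Sig_S : (⨅ a : A, ⨅ b : A, ⨅ c : A,
      imp (imp a (imp b c)) (imp (imp a b) (imp a c))) ∈ Sig

namespace ImplicativeAlgebra

variable {A : Type u} [CompleteLattice A]

/-- `a × b := ⨅ x, ((a → (b → x)) → x)`. -/
def times (IA : ImplicativeAlgebra A) (a b : A) : A :=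
  ⨅ x : A, IA.imp (IA.imp a (IA.imp b x)) x

/-- `a + b := ⨅ x, ((a → x) → ((b → x) → x))`. -/
def plus (IA : ImplicativeAlgebra A) (a b : A) : A :=
  ⨅ x : A, IA.imp (IA.imp a x) (IA.imp (IA.imp b x) x)

/-- `∃⃗_{i} f i := ⨅ x, ((⨅ i, (f i → x)) → x)`.  (`∀⃗` is just `⨅`.) -/
def aex (IA : ImplicativeAlgebra A) {ι : Sort*} (f : ι → A) : A :=
  ⨅ x : A, IA.imp (⨅ i, IA.imp (f i) x) x

/-- `φ ⊢_{Σ[I]} ψ` iff `⨅ i, (φ i → ψ i) ∈ Σ`. -/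
def SigLe (IA : ImplicativeAlgebra A) {ι : Sort*} (f g : ι → A) : Prop :=
  (⨅ i, IA.imp (f i) (g i)) ∈ IA.Sig

/-- `φ ≡_{Σ[I]} ψ` iff `φ ⊢_{Σ[I]} ψ` and `ψ ⊢_{Σ[I]} φ`. -/
def SigEquiv (IA : ImplicativeAlgebra A) {ι : Sort*} (f g : ι → A) : Prop :=
  IA.SigLe f g ∧ IA.SigLe g f

end ImplicativeAlgebra

/-- Pre-elements of the cumulative hierarchy of partial functions valued in `A`:
an element is an `A`-labelled family of previously constructed elements, i.e. a partial
function (presented by a family indexed by its domain) from earlier elements to `A`. -/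
inductive PreW (A : Type u) : Type (u + 1)
  | mk (ι : Type u) (fam : ι → PreW A) (val : ι → A)

namespace PreW

variable {A : Type u}

/-- The (index type of the) domain of a partial function. -/
def dom : PreW A → Type u
  | ⟨ι, _, _⟩ => ι

/-- The family of elements of the domain. -/
def fam : (w : PreW A) → w.dom → PreW A
  | ⟨_, f, _⟩ => f

/-- The values in `A` of the partial function. -/
def val : (w : PreW A) → w.dom → A
  | ⟨_, _, v⟩ => v

/-- `w` is hereditarily of size `< κ`:  this carves out exactly the elements of the stage
`W_κ` of the hierarchy (for `κ` inaccessible). -/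
def HSmall (κ : Cardinal.{u}) : PreW A → Prop
  | ⟨ι, f, _⟩ => Cardinal.mk ι < κ ∧ ∀ i, HSmall κ (f i)

theorem HSmall.fam {κ : Cardinal.{u}} :
    ∀ {w : PreW A}, w.HSmall κ → ∀ i : w.dom, (w.fam i).HSmall κ
  | ⟨_, _, _⟩, h, i => h.2 i

/-- The rank of an element of the hierarchy. -/
noncomputable def rank : PreW A → Ordinal.{u}
  | ⟨_, f, _⟩ => ⨆ i, Order.succ (rank (f i))

theorem rank_lt_mk {ι : Type u} (f : ι → PreW A) (v : ι → A) (i : ι) :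
    (f i).rank < (PreW.mk ι f v).rank := by
  have h : Order.succ (f i).rank ≤ ⨆ j, Order.succ (f j).rank := Ordinal.le_iSup _ i
  have : (f i).rank < ⨆ j, Order.succ (f j).rank :=
    lt_of_lt_of_le (Order.lt_succ _) h
  simpa [rank] using this

end PreW

namespace ImplicativeAlgebra

variable {A : Type u} [CompleteLattice A]

/-- `α =_W β`, defined by recursion on rank:
`α =_W β := (α ⊆_W β) × (β ⊆_W α)` where
`α ⊆_W β := ∀⃗_{t ∈ dom α} (α t → (fam α t ∈_W β))` and
`γ ∈_W β := ∃⃗_{s ∈ dom β} (β s × (fam β s =_W γ))`. -/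
noncomputable def eqW (IA : ImplicativeAlgebra A) : PreW A → PreW A → A
  | ⟨ι₁, f₁, v₁⟩, ⟨ι₂, f₂, v₂⟩ =>
    IA.times
      (⨅ t : ι₁, IA.imp (v₁ t)
        (IA.aex fun s : ι₂ => IA.times (v₂ s) (IA.eqW (f₂ s) (f₁ t))))
      (⨅ t : ι₂, IA.imp (v₂ t)
        (IA.aex fun s : ι₁ => IA.times (v₁ s) (IA.eqW (f₁ s) (f₂ t))))
termination_by α β => max α.rank β.rank
decreasing_by
  · exact max_lt (lt_max_of_lt_right (PreW.rank_lt_mk f₂ v₂ s))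
      (lt_max_of_lt_left (PreW.rank_lt_mk f₁ v₁ t))
  · exact max_lt (lt_max_of_lt_left (PreW.rank_lt_mk f₁ v₁ s))
      (lt_max_of_lt_right (PreW.rank_lt_mk f₂ v₂ t))

/-- `α ∈_W β := ∃⃗_{s ∈ dom β} (β s × (fam β s =_W α))`. -/
noncomputable def memW (IA : ImplicativeAlgebra A) (α β : PreW A) : A :=
  IA.aex fun s : β.dom => IA.times (β.val s) (IA.eqW (β.fam s) α)

/-- `α ⊆_W β := ∀⃗_{t ∈ dom α} (α t → (fam α t ∈_W β))`. -/
noncomputable def subW (IA : ImplicativeAlgebra A) (α β : PreW A) : A :=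
  ⨅ t : α.dom, IA.imp (α.val t) (IA.memW (α.fam t) β)

end ImplicativeAlgebra

/-- The stage `W = W_κ` of the hierarchy: all hereditarily `< κ`-sized elements. -/
def WSet (A : Type u) (κ : Cardinal.{u}) : Type (u + 1) :=
  {w : PreW A // w.HSmall κ}

/-- An element of the domain of `w ∈ W`, as an element of `W`. -/
def WSet.fam {A : Type u} {κ : Cardinal.{u}} (w : WSet A κ) (i : w.1.dom) : WSet A κ :=
  ⟨w.1.fam i, w.2.fam i⟩

/-- Formulas (in context of length `n`) of the first-order language of set theory, with
(de Bruijn-style) variables `Fin n`, binary predicates `∈` and `=`, connectives `⊥`, `∧`, `∨`,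
`→` and quantifiers `∃`, `∀` (binding the last variable of the enlarged context). -/
inductive SetFormula : ℕ → Type
  | bot {n : ℕ} : SetFormula n
  | mem {n : ℕ} (i j : Fin n) : SetFormula n
  | eq {n : ℕ} (i j : Fin n) : SetFormula n
  | and {n : ℕ} (φ ψ : SetFormula n) : SetFormula n
  | or {n : ℕ} (φ ψ : SetFormula n) : SetFormula n
  | imp {n : ℕ} (φ ψ : SetFormula n) : SetFormula n
  | ex {n : ℕ} (φ : SetFormula (n + 1)) : SetFormula n
  | all {n : ℕ} (φ : SetFormula (n + 1)) : SetFormula n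

namespace SetFormula

/-- Renaming of variables (since the only terms of the language of set theory are variables,
substitution is a special case). -/
def rename : {n m : ℕ} → (Fin n → Fin m) → SetFormula n → SetFormula m
  | _, _, _, .bot => .bot
  | _, _, f, .mem i j => .mem (f i) (f j)
  | _, _, f, .eq i j => .eq (f i) (f j)
  | _, _, f, .and φ ψ => .and (φ.rename f) (ψ.rename f)
  | _, _, f, .or φ ψ => .or (φ.rename f) (ψ.rename f)
  | _, _, f, .imp φ ψ => .imp (φ.rename f) (ψ.rename f)
  | _, _, f, .ex φ => .ex (φ.rename (Fin.snoc (Fin.castSucc ∘ f) (Fin.last _)))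
  | _, _, f, .all φ => .all (φ.rename (Fin.snoc (Fin.castSucc ∘ f) (Fin.last _)))

/-- Universal closure `∀x₁ … ∀xₙ φ` of a formula in context of length `n`. -/
def allClose : {n : ℕ} → SetFormula n → SetFormula 0
  | 0, φ => φ
  | _ + 1, φ => allClose (.all φ)

end SetFormula

namespace ImplicativeAlgebra

variable {A : Type u} [CompleteLattice A]

/-- The interpretation `‖φ[x₁,…,xₙ]‖ : Wⁿ → A` of a formula in context, by recursion on the
structure of `φ`:  atomic formulas are interpreted by `∈_W` and `=_W`, `∧` by `×`, `∨` by `+`,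
`→` by `→`, `∃` by `∃⃗` over `W` and `∀` by `∀⃗` (i.e. `⨅`) over `W`. -/
noncomputable def interp (IA : ImplicativeAlgebra A) (κ : Cardinal.{u}) :
    {n : ℕ} → SetFormula n → (Fin n → WSet A κ) → A
  | _, .bot, _ => ⊥
  | _, .mem i j, v => IA.memW (v i).1 (v j).1
  | _, .eq i j, v => IA.eqW (v i).1 (v j).1
  | _, .and φ ψ, v => IA.times (IA.interp κ φ v) (IA.interp κ ψ v)
  | _, .or φ ψ, v => IA.plus (IA.interp κ φ v) (IA.interp κ ψ v)
  | _, .imp φ ψ, v => IA.imp (IA.interp κ φ v) (IA.interp κ ψ v)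
  | _, .ex φ, v => IA.aex fun β : WSet A κ => IA.interp κ φ (Fin.snoc v β)
  | _, .all φ, v => ⨅ β : WSet A κ, IA.interp κ φ (Fin.snoc v β)

end ImplicativeAlgebra

/-- Untyped λ-terms with constants from `A`, in de Bruijn notation (`var 0` is the innermost
bound variable). -/
inductive LTerm (A : Type u) : Type u
  | var : ℕ → LTerm A
  | cst : A → LTerm A
  | app : LTerm A → LTerm A → LTerm A
  | lam : LTerm A → LTerm A

prefix:50 "ƛ " => LTerm.lam
infixl:70 " ⬝ " => LTerm.app

theorem PreW.rank_fam_lt {A : Type u} : ∀ (w : PreW A) (i : w.dom), (w.fam i).rank < w.rank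
  | ⟨_, f, v⟩, i => PreW.rank_lt_mk f v i

namespace ImplicativeAlgebra

variable {A : Type u} [CompleteLattice A] (IA : ImplicativeAlgebra A)

theorem imp_iInf {ι : Sort*} (a : A) (f : ι → A) :
    IA.imp a (⨅ i, f i) = ⨅ i, IA.imp a (f i) := by
  rw [iInf, IA.imp_sInf, iInf_range]

def K : A := ⨅ a : A, ⨅ b : A, IA.imp a (IA.imp b a)

def S : A := ⨅ a : A, ⨅ b : A, ⨅ c : A,
  IA.imp (IA.imp a (IA.imp b c)) (IA.imp (IA.imp a b) (IA.imp a c))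

theorem K_mem_Sig : IA.K ∈ IA.Sig := IA.Sig_K

theorem S_mem_Sig : IA.S ∈ IA.Sig := IA.Sig_S

theorem K_le (a b : A) : IA.K ≤ IA.imp a (IA.imp b a) :=
  (iInf_le _ a).trans (iInf_le _ b)

theorem S_le (a b c : A) :
    IA.S ≤ IA.imp (IA.imp a (IA.imp b c)) (IA.imp (IA.imp a b) (IA.imp a c)) :=
  ((iInf_le _ a).trans (iInf_le _ b)).trans (iInf_le _ c)

def app (a b : A) : A := sInf {c | a ≤ IA.imp b c}

theorem le_imp_app (a b : A) : a ≤ IA.imp b (IA.app a b) := by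
  rw [app, IA.imp_sInf]
  exact le_iInf₂ fun _ hc => hc

theorem app_le {a b x y : A} (ha : a ≤ IA.imp x y) (hb : b ≤ x) : IA.app a b ≤ y :=
  sInf_le (ha.trans (IA.imp_antitone hb))

theorem app_mono {a a' b b' : A} (ha : a ≤ a') (hb : b ≤ b') :
    IA.app a b ≤ IA.app a' b' :=
  IA.app_le (ha.trans (IA.le_imp_app a' b')) hb

theorem app_mem_Sig {a b : A} (ha : a ∈ IA.Sig) (hb : b ∈ IA.Sig) : IA.app a b ∈ IA.Sig :=
  IA.Sig_mp (IA.Sig_upward ha (IA.le_imp_app a b)) hb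

noncomputable def eval : LTerm A → List A → A
  | .var i, ρ => ρ.getD i ⊥
  | .cst c, _ => c
  | .app t u, ρ => IA.app (eval t ρ) (eval u ρ)
  | .lam t, ρ => ⨅ a : A, IA.imp a (eval t (a :: ρ))

def SigClosed : ℕ → LTerm A → Prop
  | n, .var i => i < n
  | _, .cst c => c ∈ IA.Sig
  | n, .app t u => SigClosed n t ∧ SigClosed n u
  | n, .lam t => SigClosed (n + 1) t

theorem eval_app_le {t u : LTerm A} {ρ : List A} {x y : A}
    (ht : IA.eval t ρ ≤ IA.imp x y) (hu : IA.eval u ρ ≤ x) : IA.eval (t ⬝ u) ρ ≤ y :=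
  IA.app_le ht hu

theorem eval_lam_le {t : LTerm A} {ρ : List A} {x y : A} (h : IA.eval t (x :: ρ) ≤ y) :
    IA.eval (ƛ t) ρ ≤ IA.imp x y :=
  (iInf_le _ x).trans (IA.imp_monotone h)

/-- `imps [a₁, …, aₙ] x = aₙ → ⋯ → a₁ → x`. -/
noncomputable def imps : List A → A → A
  | [], x => x
  | a :: ρ, x => imps ρ (IA.imp a x)

theorem imps_mono : ∀ (ρ : List A) {x y : A}, x ≤ y → IA.imps ρ x ≤ IA.imps ρ y
  | [], _, _, h => h
  | _ :: ρ, _, _, h => imps_mono ρ (IA.imp_monotone h)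

theorem imps_iInf {ι : Sort*} :
    ∀ (ρ : List A) (f : ι → A), IA.imps ρ (⨅ i, f i) = ⨅ i, IA.imps ρ (f i)
  | [], _ => rfl
  | a :: ρ, f => by
    simp only [imps, IA.imp_iInf]
    exact imps_iInf ρ _

/-! Bracket abstraction: `compile n t` is a combination of `K` and `S` realizing `t` under
`n` abstractions. -/

def I : A := IA.app (IA.app IA.S IA.K) IA.K

theorem I_le (a : A) : IA.I ≤ IA.imp a a :=
  IA.app_le (IA.app_le (IA.S_le _ _ _) (IA.K_le _ (IA.imp a a))) (IA.K_le _ _)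

noncomputable def constUnder : ℕ → A → A
  | 0, c => c
  | n + 1, c => constUnder n (IA.app IA.K c)

noncomputable def appUnder : ℕ → A → A → A
  | 0, c, d => IA.app c d
  | n + 1, c, d => appUnder n (appUnder n (IA.constUnder n IA.S) c) d

noncomputable def varUnder : ℕ → ℕ → A
  | 0, _ => IA.I
  | n + 1, 0 => IA.constUnder n IA.I
  | n + 1, i + 1 => IA.appUnder n (IA.constUnder n IA.K) (varUnder n i)

noncomputable def compile : ℕ → LTerm A → A
  | n, .var i => IA.varUnder n i
  | n, .cst c => IA.constUnder n c
  | n, .app t u => IA.appUnder n (compile n t) (compile n u)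
  | n, .lam t => compile (n + 1) t

theorem constUnder_le :
    ∀ (ρ : List A) {c x : A}, c ≤ x → IA.constUnder ρ.length c ≤ IA.imps ρ x
  | [], _, _, h => h
  | _ :: ρ, _, _, h => constUnder_le ρ (IA.app_le (IA.K_le _ _) h)

theorem appUnder_le : ∀ (ρ : List A) {c d x y : A}, c ≤ IA.imps ρ x → d ≤ IA.imps ρ y →
    IA.appUnder ρ.length c d ≤ IA.imps ρ (IA.app x y)
  | [], _, _, _, _, hc, hd => IA.app_mono hc hd
  | a :: ρ, _, _, x, y, hc, hd => by
    have hS : IA.S ≤ IA.imp (IA.imp a x) (IA.imp (IA.imp a y) (IA.imp a (IA.app x y))) :=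
      (IA.S_le _ _ _).trans (IA.imp_antitone (IA.imp_monotone (IA.le_imp_app x y)))
    refine (appUnder_le ρ (appUnder_le ρ (IA.constUnder_le ρ hS) hc) hd).trans ?_
    exact IA.imps_mono ρ (IA.app_le (IA.app_le le_rfl le_rfl) le_rfl)

theorem varUnder_le : ∀ (ρ : List A) (i : ℕ), i < ρ.length →
    IA.varUnder ρ.length i ≤ IA.imps ρ (ρ.getD i ⊥)
  | _ :: ρ, 0, _ => IA.constUnder_le ρ (IA.I_le _)
  | a :: ρ, i + 1, h => by
    refine (IA.appUnder_le ρ (IA.constUnder_le ρ (IA.K_le (ρ.getD i ⊥) a))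
      (varUnder_le ρ i (Nat.lt_of_succ_lt_succ h))).trans ?_
    exact IA.imps_mono ρ (IA.app_le le_rfl le_rfl)

theorem compile_le : ∀ (t : LTerm A) (ρ : List A), IA.SigClosed ρ.length t →
    IA.compile ρ.length t ≤ IA.imps ρ (IA.eval t ρ)
  | .var i, ρ, h => IA.varUnder_le ρ i h
  | .cst _, ρ, _ => IA.constUnder_le ρ le_rfl
  | .app t u, ρ, h => IA.appUnder_le ρ (compile_le t ρ h.1) (compile_le u ρ h.2)
  | .lam t, ρ, h => by
    rw [eval, IA.imps_iInf ρ]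
    exact le_iInf fun a => compile_le t (a :: ρ) h

theorem constUnder_mem_Sig : ∀ (n : ℕ) {c : A}, c ∈ IA.Sig → IA.constUnder n c ∈ IA.Sig
  | 0, _, h => h
  | n + 1, _, h => constUnder_mem_Sig n (IA.app_mem_Sig IA.K_mem_Sig h)

theorem appUnder_mem_Sig : ∀ (n : ℕ) {c d : A}, c ∈ IA.Sig → d ∈ IA.Sig →
    IA.appUnder n c d ∈ IA.Sig
  | 0, _, _, hc, hd => IA.app_mem_Sig hc hd
  | n + 1, _, _, hc, hd =>
    appUnder_mem_Sig n (appUnder_mem_Sig n (IA.constUnder_mem_Sig n IA.S_mem_Sig) hc) hd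

theorem varUnder_mem_Sig : ∀ (n i : ℕ), IA.varUnder n i ∈ IA.Sig
  | 0, _ => IA.app_mem_Sig (IA.app_mem_Sig IA.S_mem_Sig IA.K_mem_Sig) IA.K_mem_Sig
  | n + 1, 0 => IA.constUnder_mem_Sig n (varUnder_mem_Sig 0 0)
  | n + 1, i + 1 =>
    IA.appUnder_mem_Sig n (IA.constUnder_mem_Sig n IA.K_mem_Sig) (varUnder_mem_Sig n i)

theorem compile_mem_Sig :
    ∀ (t : LTerm A) (n : ℕ), IA.SigClosed n t → IA.compile n t ∈ IA.Sig
  | .var i, n, _ => IA.varUnder_mem_Sig n i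
  | .cst _, n, h => IA.constUnder_mem_Sig n h
  | .app t u, n, h =>
    IA.appUnder_mem_Sig n (compile_mem_Sig t n h.1) (compile_mem_Sig u n h.2)
  | .lam t, n, h => compile_mem_Sig t (n + 1) h

theorem eval_mem_Sig (t : LTerm A) (h : IA.SigClosed 0 t) : IA.eval t [] ∈ IA.Sig :=
  IA.Sig_upward (IA.compile_mem_Sig t 0 h) (IA.compile_le t [] h)

/-- Realizability of well-founded induction, via Turing's fixed point `Y = W W` with
`W = λx. f (x x)` and `f = λe. body`. -/
theorem exists_realizer_of_wellFounded {β : Sort*} {r : β → β → Prop} (hr : WellFounded r)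
    {τ : β → A} {body : LTerm A} (hbody : IA.SigClosed 1 body)
    (hstep : ∀ b e, (∀ c, r c b → e ≤ τ c) → IA.eval body [e] ≤ τ b) :
    ∃ θ ∈ IA.Sig, ∀ b, θ ≤ τ b := by
  let f : A := IA.eval (ƛ body) []
  let W : LTerm A := ƛ .cst f ⬝ (.var 0 ⬝ .var 0)
  have hW : IA.eval W [] ∈ IA.Sig :=
    IA.eval_mem_Sig W ⟨IA.eval_mem_Sig (ƛ body) hbody, Nat.zero_lt_one, Nat.zero_lt_one⟩
  refine ⟨IA.app (IA.eval W []) (IA.eval W []), IA.app_mem_Sig hW hW, fun b => ?_⟩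
  induction b using hr.induction with
  | _ b IH =>
    have hWW : IA.app (IA.eval W []) (IA.eval W []) ≤
        IA.app f (IA.app (IA.eval W []) (IA.eval W [])) :=
      IA.app_le (iInf_le (fun a => IA.imp a (IA.eval _ [a])) _) le_rfl
    exact hWW.trans (IA.app_le (IA.eval_lam_le (hstep b _ IH)) le_rfl)

def F : A := ⨅ a : A, ⨅ b : A, IA.imp a (IA.imp b b)

theorem F_le (a b : A) : IA.F ≤ IA.imp a (IA.imp b b) :=
  (iInf_le _ a).trans (iInf_le _ b)

theorem F_mem_Sig : IA.F ∈ IA.Sig :=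
  IA.Sig_upward (IA.eval_mem_Sig (ƛ ƛ .var 0) (by simp [SigClosed]))
    (le_iInf₂ fun _ _ => IA.eval_lam_le (IA.eval_lam_le le_rfl))

variable {IA} {ρ : List A}

theorem eval_times_elim {p k : LTerm A} {a b x : A} (hp : IA.eval p ρ ≤ IA.times a b)
    (hk : IA.eval k ρ ≤ IA.imp a (IA.imp b x)) : IA.eval (p ⬝ k) ρ ≤ x :=
  IA.eval_app_le (hp.trans (iInf_le _ x)) hk

theorem eval_fst_le {p : LTerm A} {a b : A} (hp : IA.eval p ρ ≤ IA.times a b) :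
    IA.eval (p ⬝ .cst IA.K) ρ ≤ a :=
  eval_times_elim hp (IA.K_le a b)

theorem eval_snd_le {p : LTerm A} {a b : A} (hp : IA.eval p ρ ≤ IA.times a b) :
    IA.eval (p ⬝ .cst IA.F) ρ ≤ b :=
  eval_times_elim hp (IA.F_le a b)

theorem eval_plus_elim {p l r : LTerm A} {a b x : A} (hp : IA.eval p ρ ≤ IA.plus a b)
    (hl : IA.eval l ρ ≤ IA.imp a x) (hr : IA.eval r ρ ≤ IA.imp b x) :
    IA.eval (p ⬝ l ⬝ r) ρ ≤ x :=
  IA.eval_app_le (IA.eval_app_le (hp.trans (iInf_le _ x)) hl) hr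

theorem eval_aex_elim {ι : Sort*} {f : ι → A} {p k : LTerm A} {x : A}
    (hp : IA.eval p ρ ≤ IA.aex f) (hk : IA.eval k ρ ≤ ⨅ i, IA.imp (f i) x) :
    IA.eval (p ⬝ k) ρ ≤ x :=
  IA.eval_app_le (hp.trans (iInf_le _ x)) hk

/-- Elimination of a bounded existential `∃⃗ i, (a i × b i)`, the shape of `∈_W`. -/
theorem eval_aex_times_elim {ι : Sort*} {a b : ι → A} {p body : LTerm A} {x : A}
    (hp : IA.eval p ρ ≤ IA.aex fun i => IA.times (a i) (b i))
    (hbody : ∀ i q, IA.eval body (b i :: a i :: q :: ρ) ≤ x) :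
    IA.eval (p ⬝ (ƛ .var 0 ⬝ (ƛ ƛ body))) ρ ≤ x :=
  eval_aex_elim hp <| le_iInf fun i => IA.eval_lam_le <|
    eval_times_elim le_rfl (IA.eval_lam_le (IA.eval_lam_le (hbody i _)))

theorem eval_le_times {u v : LTerm A} {a b : A} (hu : ∀ k, IA.eval u (k :: ρ) ≤ a)
    (hv : ∀ k, IA.eval v (k :: ρ) ≤ b) : IA.eval (ƛ .var 0 ⬝ u ⬝ v) ρ ≤ IA.times a b :=
  le_iInf fun _ => IA.eval_lam_le (IA.eval_app_le (IA.eval_app_le le_rfl (hu _)) (hv _))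

theorem eval_le_plus_inl {u : LTerm A} {a b : A} (hu : ∀ r l, IA.eval u (r :: l :: ρ) ≤ a) :
    IA.eval (ƛ ƛ .var 1 ⬝ u) ρ ≤ IA.plus a b :=
  le_iInf fun _ => IA.eval_lam_le (IA.eval_lam_le (IA.eval_app_le le_rfl (hu _ _)))

theorem eval_le_plus_inr {u : LTerm A} {a b : A} (hu : ∀ r l, IA.eval u (r :: l :: ρ) ≤ b) :
    IA.eval (ƛ ƛ .var 0 ⬝ u) ρ ≤ IA.plus a b :=
  le_iInf fun _ => IA.eval_lam_le (IA.eval_lam_le (IA.eval_app_le le_rfl (hu _ _)))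

theorem eval_le_aex {ι : Sort*} {f : ι → A} (i : ι) {u : LTerm A}
    (hu : ∀ k, IA.eval u (k :: ρ) ≤ f i) : IA.eval (ƛ .var 0 ⬝ u) ρ ≤ IA.aex f :=
  le_iInf fun _ => IA.eval_lam_le (IA.eval_app_le (iInf_le _ i) (hu _))

variable (IA)

theorem times_mem_Sig {a b : A} (ha : a ∈ IA.Sig) (hb : b ∈ IA.Sig) : IA.times a b ∈ IA.Sig :=
  IA.Sig_upward (IA.eval_mem_Sig (ƛ .var 0 ⬝ .cst a ⬝ .cst b) (by simp [SigClosed, ha, hb]))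
    (eval_le_times (fun _ => le_rfl) fun _ => le_rfl)

theorem aex_mem_Sig {ι : Sort*} {f : ι → A} (i : ι) (hi : f i ∈ IA.Sig) :
    IA.aex f ∈ IA.Sig :=
  IA.Sig_upward (IA.eval_mem_Sig (ƛ .var 0 ⬝ .cst (f i)) (by simp [SigClosed, hi]))
    (eval_le_aex i fun _ => le_rfl)

theorem eqW_eq_times : ∀ α β : PreW A, IA.eqW α β = IA.times (IA.subW α β) (IA.subW β α)
  | ⟨_, _, _⟩, ⟨_, _, _⟩ => by rw [eqW]; rfl

variable {IA}

theorem eval_eqW_fst_le {p : LTerm A} {α β : PreW A} (hp : IA.eval p ρ ≤ IA.eqW α β) :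
    IA.eval (p ⬝ .cst IA.K) ρ ≤ IA.subW α β :=
  eval_fst_le (hp.trans (IA.eqW_eq_times α β).le)

theorem eval_eqW_snd_le {p : LTerm A} {α β : PreW A} (hp : IA.eval p ρ ≤ IA.eqW α β) :
    IA.eval (p ⬝ .cst IA.F) ρ ≤ IA.subW β α :=
  eval_snd_le (hp.trans (IA.eqW_eq_times α β).le)

theorem eval_subW_elim {p u : LTerm A} {α β : PreW A} (t : α.dom)
    (hp : IA.eval p ρ ≤ IA.subW α β) (hu : IA.eval u ρ ≤ α.val t) :
    IA.eval (p ⬝ u) ρ ≤ IA.memW (α.fam t) β :=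
  IA.eval_app_le (hp.trans (iInf_le _ t)) hu

variable (IA)

theorem exists_realizer_eqW_refl : ∃ θ ∈ IA.Sig, ∀ a : PreW A, θ ≤ IA.eqW a a := by
  -- `λ e. ⟨q, q⟩` with `q = λ d. ⟨d, e⟩`
  let q : LTerm A := ƛ ƛ .var 0 ⬝ (ƛ .var 0 ⬝ .var 2 ⬝ .var 4)
  refine IA.exists_realizer_of_wellFounded (InvImage.wf PreW.rank Ordinal.lt_wf)
    (body := ƛ .var 0 ⬝ q ⬝ q) (by simp [q, SigClosed]) fun a e IH => ?_
  have hq : ∀ k, IA.eval q [k, e] ≤ IA.subW a a := fun k =>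
    le_iInf fun t => IA.eval_lam_le <| eval_le_aex t fun _ =>
      eval_le_times (fun _ => le_rfl) fun _ => IH (a.fam t) (a.rank_fam_lt t)
  rw [eqW_eq_times]
  exact eval_le_times hq hq

theorem exists_realizer_eqW_symm :
    ∃ θ ∈ IA.Sig, ∀ a b : PreW A, θ ≤ IA.imp (IA.eqW a b) (IA.eqW b a) := by
  refine ⟨IA.eval (ƛ ƛ .var 0 ⬝ (.var 1 ⬝ .cst IA.F) ⬝ (.var 1 ⬝ .cst IA.K)) [],
    IA.eval_mem_Sig _ (by simp [SigClosed, IA.K_mem_Sig, IA.F_mem_Sig]), fun a b => ?_⟩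
  refine IA.eval_lam_le (x := IA.eqW a b) ?_
  rw [IA.eqW_eq_times b a]
  refine eval_le_times (fun _ => ?_) (fun _ => ?_)
  exacts [eval_eqW_snd_le le_rfl, eval_eqW_fst_le le_rfl]

/-- The first premise is the induction hypothesis of `exists_realizer_eqW_trans`. -/
theorem exists_realizer_subW_trans : ∃ θ ∈ IA.Sig, ∀ x y z : PreW A,
    θ ≤ IA.imp (⨅ (t : x.dom) (s : y.dom) (u : z.dom), IA.imp (IA.eqW (z.fam u) (y.fam s))
        (IA.imp (IA.eqW (y.fam s) (x.fam t)) (IA.eqW (z.fam u) (x.fam t))))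
      (IA.imp (IA.subW x y) (IA.imp (IA.subW y z) (IA.subW x z))) := by
  -- `λ e p q d. p d (λ⟨d₁, g₁⟩. q d₁ (λ⟨d₂, g₂⟩. ⟨d₂, e g₂ g₁⟩))`
  let inner : LTerm A := ƛ .var 0 ⬝ (ƛ .var 0 ⬝ .var 3 ⬝ (.var 11 ⬝ .var 2 ⬝ .var 5))
  let outer : LTerm A := .var 4 ⬝ .var 1 ⬝ (ƛ .var 0 ⬝ (ƛ ƛ inner))
  refine ⟨IA.eval (ƛ ƛ ƛ ƛ .var 2 ⬝ .var 0 ⬝ (ƛ .var 0 ⬝ (ƛ ƛ outer))) [],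
    IA.eval_mem_Sig _ (by simp [inner, outer, SigClosed]), fun x y z => ?_⟩
  refine IA.eval_lam_le (IA.eval_lam_le (IA.eval_lam_le (le_iInf fun t => ?_)))
  refine IA.eval_lam_le (eval_aex_times_elim (eval_subW_elim t le_rfl le_rfl) fun s _ => ?_)
  refine eval_aex_times_elim (eval_subW_elim s le_rfl le_rfl) fun u _ => ?_
  refine eval_le_aex u fun _ => eval_le_times (fun _ => le_rfl) fun _ => ?_
  exact IA.eval_app_le (IA.eval_app_le ((iInf_le _ t).trans ((iInf_le _ s).trans
    (iInf_le _ u))) le_rfl) le_rfl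

theorem exists_realizer_eqW_trans : ∃ θ ∈ IA.Sig, ∀ a b c : PreW A,
    θ ≤ IA.imp (IA.eqW a b) (IA.imp (IA.eqW b c) (IA.eqW a c)) := by
  obtain ⟨θ, hθ, hθle⟩ := IA.exists_realizer_subW_trans
  suffices h : ∃ θ' ∈ IA.Sig, ∀ p : PreW A × PreW A × PreW A,
      θ' ≤ IA.imp (IA.eqW p.1 p.2.1) (IA.imp (IA.eqW p.2.1 p.2.2) (IA.eqW p.1 p.2.2)) by
    obtain ⟨θ', hθ', hθ'le⟩ := h
    exact ⟨θ', hθ', fun a b c => hθ'le (a, b, c)⟩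
  let μ : PreW A × PreW A × PreW A → Ordinal.{u} := fun p =>
    max (max p.1.rank p.2.1.rank) p.2.2.rank
  have hμ {x y z : PreW A} (t : x.dom) (s : y.dom) (u : z.dom) :
      μ (x.fam t, y.fam s, z.fam u) < μ (x, y, z) :=
    max_lt (max_lt (lt_max_of_lt_left (lt_max_of_lt_left (x.rank_fam_lt t)))
      (lt_max_of_lt_left (lt_max_of_lt_right (y.rank_fam_lt s))))
      (lt_max_of_lt_right (z.rank_fam_lt u))
  -- `λ e h₁ h₂. ⟨θ e h₁.1 h₂.1, θ e h₂.2 h₁.2⟩`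
  refine IA.exists_realizer_of_wellFounded (InvImage.wf μ Ordinal.lt_wf)
    (body := ƛ ƛ ƛ .var 0
      ⬝ (.cst θ ⬝ .var 3 ⬝ (.var 2 ⬝ .cst IA.K) ⬝ (.var 1 ⬝ .cst IA.K))
      ⬝ (.cst θ ⬝ .var 3 ⬝ (.var 1 ⬝ .cst IA.F) ⬝ (.var 2 ⬝ .cst IA.F)))
    (by simp [SigClosed, hθ, IA.K_mem_Sig, IA.F_mem_Sig]) fun ⟨a, b, c⟩ e IH => ?_
  refine IA.eval_lam_le (IA.eval_lam_le ?_)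
  rw [IA.eqW_eq_times a c]
  refine eval_le_times (fun _ => ?_) fun _ => ?_
  · refine IA.eval_app_le (IA.eval_app_le (IA.eval_app_le (hθle a b c) ?_)
      (eval_eqW_fst_le le_rfl)) (eval_eqW_fst_le le_rfl)
    refine le_iInf fun t => le_iInf fun s => le_iInf fun u => IH (c.fam u, b.fam s, a.fam t) ?_
    exact (hμ u s t).trans_eq (by simp only [μ]; ac_rfl)
  · refine IA.eval_app_le (IA.eval_app_le (IA.eval_app_le (hθle c b a) ?_)
      (eval_eqW_snd_le le_rfl)) (eval_eqW_snd_le le_rfl)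
    exact le_iInf fun t => le_iInf fun s => le_iInf fun u =>
      IH (a.fam u, b.fam s, c.fam t) (hμ u s t)

theorem exists_realizer_memW_congr_left : ∃ θ ∈ IA.Sig, ∀ a b c : PreW A,
    θ ≤ IA.imp (IA.eqW a b) (IA.imp (IA.memW a c) (IA.memW b c)) := by
  obtain ⟨T, hT, hTle⟩ := IA.exists_realizer_eqW_trans
  -- `λ h m. m (λ⟨d, g⟩. ⟨d, T g h⟩)`
  refine ⟨IA.eval (ƛ ƛ .var 0 ⬝ (ƛ .var 0 ⬝ (ƛ ƛ
      ƛ .var 0 ⬝ (ƛ .var 0 ⬝ .var 3 ⬝ (.cst T ⬝ .var 2 ⬝ .var 6))))) [],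
    IA.eval_mem_Sig _ (by simp [SigClosed, hT]), fun a b c => ?_⟩
  refine IA.eval_lam_le (IA.eval_lam_le (eval_aex_times_elim le_rfl fun s _ => ?_))
  refine eval_le_aex s fun _ => eval_le_times (fun _ => le_rfl) fun _ => ?_
  exact IA.eval_app_le (IA.eval_app_le (hTle _ a b) le_rfl) le_rfl

theorem exists_realizer_memW_of_subW : ∃ θ ∈ IA.Sig, ∀ a c d : PreW A,
    θ ≤ IA.imp (IA.memW a c) (IA.imp (IA.subW c d) (IA.memW a d)) := by
  obtain ⟨T, hT, hTle⟩ := IA.exists_realizer_eqW_trans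
  -- `λ m h. m (λ⟨d₁, g₁⟩. h d₁ (λ⟨d₂, g₂⟩. ⟨d₂, T g₂ g₁⟩))`
  let inner : LTerm A := ƛ .var 0 ⬝ (ƛ .var 0 ⬝ .var 3 ⬝ (.cst T ⬝ .var 2 ⬝ .var 5))
  refine ⟨IA.eval (ƛ ƛ .var 1 ⬝ (ƛ .var 0 ⬝ (ƛ ƛ
      .var 3 ⬝ .var 1 ⬝ (ƛ .var 0 ⬝ (ƛ ƛ inner))))) [],
    IA.eval_mem_Sig _ (by simp [inner, SigClosed, hT]), fun a c d => ?_⟩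
  refine IA.eval_lam_le (IA.eval_lam_le (eval_aex_times_elim le_rfl fun s _ => ?_))
  refine eval_aex_times_elim (eval_subW_elim s le_rfl le_rfl) fun u _ => ?_
  refine eval_le_aex u fun _ => eval_le_times (fun _ => le_rfl) fun _ => ?_
  exact IA.eval_app_le (IA.eval_app_le (hTle _ _ a) le_rfl) le_rfl

/-- The numerals `0 = ∅` and `n + 1 = {0, …, n}`. The element `m` of `n + 1` is labelled by
`‖m ∈ n ∨ m = n‖` rather than `⊤`, so that a realizer of `z ∈ n + 1` carries the case
distinction `z ∈ n ∨ z = n`, which no realizer could compute from the index `m` alone. -/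
noncomputable def natW : ℕ → PreW A
  | 0 => ⟨ULift (Fin 0), fun i => i.down.elim0, fun i => i.down.elim0⟩
  | n + 1 => ⟨ULift (Fin (n + 1)), fun i => natW i.down.val, fun i =>
      IA.plus (IA.memW (natW i.down.val) (natW n)) (IA.eqW (natW i.down.val) (natW n))⟩
  decreasing_by
  · exact i.down.isLt
  · exact i.down.isLt
  · exact Nat.lt_succ_self n

noncomputable def natLabel (n m : ℕ) : A :=
  IA.plus (IA.memW (IA.natW m) (IA.natW n)) (IA.eqW (IA.natW m) (IA.natW n))

theorem memW_natW_succ (n : ℕ) (z : PreW A) : IA.memW z (IA.natW (n + 1)) =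
    IA.aex fun i : ULift.{u} (Fin (n + 1)) =>
      IA.times (IA.natLabel n i.down) (IA.eqW (IA.natW i.down) z) := by
  rw [natW]
  rfl

theorem natW_hSmall {κ : Cardinal.{u}} (hκ : Cardinal.aleph0 < κ) :
    ∀ n, (IA.natW n).HSmall κ
  | 0 => by
    rw [natW]
    exact ⟨(Cardinal.lt_aleph0_of_finite _).trans hκ, fun i => i.down.elim0⟩
  | n + 1 => by
    rw [natW]
    exact ⟨(Cardinal.lt_aleph0_of_finite _).trans hκ, fun i => natW_hSmall hκ i.down.val⟩
  termination_by n => n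
  decreasing_by exact i.down.isLt

noncomputable def omegaW : PreW A := ⟨ULift.{u} ℕ, fun i => IA.natW i.down, fun _ => ⊤⟩

theorem omegaW_hSmall {κ : Cardinal.{u}} (hκ : Cardinal.aleph0 < κ) :
    (IA.omegaW : PreW A).HSmall κ :=
  ⟨by simpa using hκ, fun i => IA.natW_hSmall hκ i.down⟩

variable {IA}

theorem eval_memW_natW_zero_elim {p k : LTerm A} {z : PreW A} {x : A}
    (hp : IA.eval p ρ ≤ IA.memW z (IA.natW 0)) : IA.eval (p ⬝ k) ρ ≤ x := by
  rw [natW] at hp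
  exact eval_aex_elim hp (le_iInf fun i => i.down.elim0)

variable (IA)

theorem iInf_not_memW_natW_zero_mem_Sig {ι : Sort*} (z : ι → PreW A) :
    (⨅ i, IA.imp (IA.memW (z i) (IA.natW 0)) ⊥) ∈ IA.Sig :=
  IA.Sig_upward (IA.eval_mem_Sig (ƛ .var 0 ⬝ .var 0) (by simp [SigClosed]))
    (le_iInf fun _ => IA.eval_lam_le (eval_memW_natW_zero_elim le_rfl))

theorem exists_realizer_natW_memW_omegaW :
    ∃ θ ∈ IA.Sig, ∀ m : ℕ, θ ≤ IA.memW (IA.natW m) IA.omegaW := by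
  obtain ⟨R, hR, hRle⟩ := IA.exists_realizer_eqW_refl
  refine ⟨IA.eval (ƛ .var 0 ⬝ (ƛ .var 0 ⬝ .cst IA.K ⬝ .cst R)) [],
    IA.eval_mem_Sig _ (by simp [SigClosed, hR, IA.K_mem_Sig]), fun m => ?_⟩
  exact eval_le_aex (ULift.up m) fun _ => eval_le_times (fun _ => le_top) fun _ => hRle _

theorem exists_realizer_memW_natW_succ_of_eqW : ∃ θ ∈ IA.Sig, ∀ (n : ℕ) (γ : PreW A),
    θ ≤ IA.imp (IA.eqW (IA.natW n) γ) (IA.memW γ (IA.natW (n + 1))) := by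
  obtain ⟨R, hR, hRle⟩ := IA.exists_realizer_eqW_refl
  refine ⟨IA.eval (ƛ ƛ .var 0 ⬝ (ƛ .var 0 ⬝ (ƛ ƛ .var 0 ⬝ .cst R) ⬝ .var 2)) [],
    IA.eval_mem_Sig _ (by simp [SigClosed, hR]), fun n γ => ?_⟩
  rw [memW_natW_succ]
  refine IA.eval_lam_le (eval_le_aex (ULift.up (Fin.last n)) fun _ => ?_)
  exact eval_le_times (fun _ => eval_le_plus_inr fun _ _ => hRle _) fun _ => le_rfl

theorem exists_realizer_memW_natW_succ_of_memW_natW : ∃ θ ∈ IA.Sig, ∀ (n : ℕ) (s : PreW A),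
    θ ≤ IA.imp (IA.memW s (IA.natW n)) (IA.memW s (IA.natW (n + 1))) := by
  obtain ⟨SY, hSY, hSYle⟩ := IA.exists_realizer_eqW_symm
  obtain ⟨M, hM, hMle⟩ := IA.exists_realizer_memW_natW_succ_of_eqW
  suffices h : ∃ θ ∈ IA.Sig, ∀ n : ℕ,
      θ ≤ ⨅ s, IA.imp (IA.memW s (IA.natW n)) (IA.memW s (IA.natW (n + 1))) by
    obtain ⟨θ, hθ, hθle⟩ := h
    exact ⟨θ, hθ, fun n s => (hθle n).trans (iInf_le _ s)⟩
  -- `λ e m. m (λ⟨d, g⟩. ⟨d (λ p. inl (e p)) (λ c. inl (M (SY c))), g⟩)`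
  let relabel : LTerm A := .var 3 ⬝ (ƛ ƛ ƛ .var 1 ⬝ (.var 9 ⬝ .var 2))
    ⬝ (ƛ ƛ ƛ .var 1 ⬝ (.cst M ⬝ (.cst SY ⬝ .var 2)))
  refine IA.exists_realizer_of_wellFounded Nat.lt_wfRel.wf
    (body := ƛ .var 0 ⬝ (ƛ .var 0 ⬝ (ƛ ƛ ƛ .var 0 ⬝ (ƛ .var 0 ⬝ relabel ⬝ .var 2))))
    (by simp [relabel, SigClosed, hM, hSY]) fun n e IH => le_iInf fun s => IA.eval_lam_le ?_
  cases n with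
  | zero => exact eval_memW_natW_zero_elim le_rfl
  | succ n =>
    rw [memW_natW_succ, memW_natW_succ]
    refine eval_aex_times_elim le_rfl fun i _ => ?_
    refine eval_le_aex (ULift.up i.down.castSucc) fun _ =>
      eval_le_times (fun _ => ?_) fun _ => le_rfl
    refine eval_plus_elim le_rfl (IA.eval_lam_le (eval_le_plus_inl fun _ _ => ?_))
      (IA.eval_lam_le (eval_le_plus_inl fun _ _ => ?_))
    · exact IA.eval_app_le ((IH n n.lt_succ_self).trans (iInf_le _ _)) le_rfl
    · exact IA.eval_app_le (hMle _ _) (IA.eval_app_le (hSYle _ _) le_rfl)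

theorem exists_realizer_memW_natW_succ_of_eqW_of_memW :
    ∃ θ ∈ IA.Sig, ∀ (n : ℕ) (γ z : PreW A), θ ≤ IA.imp (IA.eqW (IA.natW n) γ)
      (IA.imp (IA.memW z γ) (IA.memW z (IA.natW (n + 1)))) := by
  obtain ⟨MS, hMS, hMSle⟩ := IA.exists_realizer_memW_of_subW
  obtain ⟨M, hM, hMle⟩ := IA.exists_realizer_memW_natW_succ_of_memW_natW
  refine ⟨IA.eval (ƛ ƛ .cst M ⬝ (.cst MS ⬝ .var 0 ⬝ (.var 1 ⬝ .cst IA.F))) [],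
    IA.eval_mem_Sig _ (by simp [SigClosed, hM, hMS, IA.F_mem_Sig]), fun n γ z => ?_⟩
  refine IA.eval_lam_le (IA.eval_lam_le (IA.eval_app_le (hMle n z) ?_))
  exact IA.eval_app_le (IA.eval_app_le (hMSle _ _ _) le_rfl) (eval_eqW_snd_le le_rfl)

theorem exists_realizer_memW_or_eqW_of_memW_natW_succ :
    ∃ θ ∈ IA.Sig, ∀ (n : ℕ) (γ z : PreW A), θ ≤ IA.imp (IA.eqW (IA.natW n) γ)
      (IA.imp (IA.memW z (IA.natW (n + 1))) (IA.plus (IA.memW z γ) (IA.eqW z γ))) := by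
  obtain ⟨T, hT, hTle⟩ := IA.exists_realizer_eqW_trans
  obtain ⟨SY, hSY, hSYle⟩ := IA.exists_realizer_eqW_symm
  obtain ⟨CM, hCM, hCMle⟩ := IA.exists_realizer_memW_congr_left
  obtain ⟨MS, hMS, hMSle⟩ := IA.exists_realizer_memW_of_subW
  -- `λ h m. m (λ⟨d, g⟩. d (λ p. inl (MS (CM g p) h.1)) (λ c. inr (T (T (SY g) c) h)))`
  let cases : LTerm A := .var 1
    ⬝ (ƛ ƛ ƛ .var 1
      ⬝ (.cst MS ⬝ (.cst CM ⬝ .var 3 ⬝ .var 2) ⬝ (.var 7 ⬝ .cst IA.K)))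
    ⬝ (ƛ ƛ ƛ .var 0 ⬝ (.cst T ⬝ (.cst T ⬝ (.cst SY ⬝ .var 3) ⬝ .var 2) ⬝ .var 7))
  refine ⟨IA.eval (ƛ ƛ .var 0 ⬝ (ƛ .var 0 ⬝ (ƛ ƛ cases))) [],
    IA.eval_mem_Sig _ (by simp [cases, SigClosed, hT, hSY, hCM, hMS, IA.K_mem_Sig]),
    fun n γ z => IA.eval_lam_le (IA.eval_lam_le ?_)⟩
  rw [memW_natW_succ]
  refine eval_aex_times_elim le_rfl fun i _ => ?_
  refine eval_plus_elim le_rfl (IA.eval_lam_le (eval_le_plus_inl fun _ _ => ?_))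
    (IA.eval_lam_le (eval_le_plus_inr fun _ _ => ?_))
  · refine IA.eval_app_le (IA.eval_app_le (hMSle _ (IA.natW n) _) ?_) (eval_eqW_fst_le le_rfl)
    exact IA.eval_app_le (IA.eval_app_le (hCMle _ _ _) le_rfl) le_rfl
  · refine IA.eval_app_le (IA.eval_app_le (hTle _ (IA.natW n) _) ?_) le_rfl
    refine IA.eval_app_le (IA.eval_app_le (hTle _ (IA.natW i.down) _) ?_) le_rfl
    exact IA.eval_app_le (hSYle _ _) le_rfl

/-- `n + 1` is the successor of `n` required by `Inf₂`. -/
theorem exists_realizer_succ {κ : Cardinal.{u}} (hκ : Cardinal.aleph0 < κ) :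
    ∃ θ ∈ IA.Sig, ∀ (n : ℕ) (γ : PreW A), θ ≤ IA.imp (IA.eqW (IA.natW n) γ)
      (IA.aex fun y : WSet A κ => IA.times (IA.memW y.1 IA.omegaW)
        (IA.times (⨅ z : WSet A κ, IA.imp (IA.memW z.1 γ) (IA.memW z.1 y.1))
          (IA.times (IA.memW γ y.1)
            (⨅ z : WSet A κ, IA.imp (IA.memW z.1 y.1)
              (IA.plus (IA.memW z.1 γ) (IA.eqW z.1 γ)))))) := by
  obtain ⟨N, hN, hNle⟩ := IA.exists_realizer_natW_memW_omegaW
  obtain ⟨S₁, hS₁, hS₁le⟩ := IA.exists_realizer_memW_natW_succ_of_eqW_of_memW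
  obtain ⟨S₂, hS₂, hS₂le⟩ := IA.exists_realizer_memW_natW_succ_of_eqW
  obtain ⟨S₃, hS₃, hS₃le⟩ := IA.exists_realizer_memW_or_eqW_of_memW_natW_succ
  -- `λ h. ⟨n + 1, N, λ m. S₁ h m, S₂ h, λ m. S₃ h m⟩`
  refine ⟨IA.eval (ƛ ƛ .var 0 ⬝ (ƛ .var 0 ⬝ .cst N ⬝ (ƛ .var 0
      ⬝ (ƛ .cst S₁ ⬝ .var 4 ⬝ .var 0) ⬝ (ƛ .var 0 ⬝ (.cst S₂ ⬝ .var 4)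
        ⬝ (ƛ .cst S₃ ⬝ .var 5 ⬝ .var 0))))) [],
    IA.eval_mem_Sig _ (by simp [SigClosed, hN, hS₁, hS₂, hS₃]), fun n γ => ?_⟩
  let y : WSet A κ := ⟨IA.natW (n + 1), IA.natW_hSmall hκ (n + 1)⟩
  refine IA.eval_lam_le (eval_le_aex y fun _ =>
    eval_le_times (fun _ => hNle (n + 1)) fun _ => eval_le_times (fun _ => ?_) fun _ =>
      eval_le_times (fun _ => ?_) fun _ => ?_)
  · exact le_iInf fun z => IA.eval_lam_le (IA.eval_app_le (IA.eval_app_le (hS₁le _ _ _) le_rfl)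
      le_rfl)
  · exact IA.eval_app_le (hS₂le _ _) le_rfl
  · exact le_iInf fun z => IA.eval_lam_le (IA.eval_app_le (IA.eval_app_le (hS₃le _ _ _) le_rfl)
      le_rfl)

theorem exists_realizer_of_memW_omegaW {P : PreW A → A}
    (h : ∃ θ ∈ IA.Sig, ∀ (n : ℕ) (γ : PreW A),
      θ ≤ IA.imp (IA.eqW (IA.natW n) γ) (P γ)) :
    ∃ θ ∈ IA.Sig, ∀ γ : PreW A, θ ≤ IA.imp (IA.memW γ IA.omegaW) (P γ) := by
  obtain ⟨θ, hθ, hθle⟩ := h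
  refine ⟨IA.eval (ƛ .var 0 ⬝ (ƛ .var 0 ⬝ (ƛ ƛ .cst θ ⬝ .var 0))) [],
    IA.eval_mem_Sig _ (by simp [SigClosed, hθ]), fun γ => IA.eval_lam_le ?_⟩
  exact eval_aex_times_elim le_rfl fun i _ => IA.eval_app_le (hθle _ _) le_rfl

end ImplicativeAlgebra

theorem stmt16_general {A : Type u} [CompleteLattice A] (IA : ImplicativeAlgebra A)
    (κ : Cardinal.{u}) (hκ : κ.IsInaccessible) :
    IA.interp κ
      (SetFormula.ex
        ((SetFormula.ex ((SetFormula.mem 1 0).and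
            (SetFormula.all ((SetFormula.mem 2 1).imp SetFormula.bot)))).and
         (SetFormula.all ((SetFormula.mem 1 0).imp
            (SetFormula.ex ((SetFormula.mem 2 0).and
              ((SetFormula.all ((SetFormula.mem 3 1).imp (SetFormula.mem 3 2))).and
               ((SetFormula.mem 1 2).and
                (SetFormula.all ((SetFormula.mem 3 2).imp
                  ((SetFormula.mem 3 1).or (SetFormula.eq 3 1))))))))))))
      (fun i => i.elim0) ∈ IA.Sig := by
  have hℵ₀ : Cardinal.aleph0 < κ := hκ.1
  obtain ⟨N, hN, hNle⟩ := IA.exists_realizer_natW_memW_omegaW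
  obtain ⟨θ, hθ, hθle⟩ := IA.exists_realizer_of_memW_omegaW (IA.exists_realizer_succ hℵ₀)
  refine IA.aex_mem_Sig ⟨IA.omegaW, IA.omegaW_hSmall hℵ₀⟩ (IA.times_mem_Sig ?_ ?_)
  · refine IA.aex_mem_Sig ⟨IA.natW 0, IA.natW_hSmall hℵ₀ 0⟩ (IA.times_mem_Sig ?_ ?_)
    · exact IA.Sig_upward hN (hNle 0)
    · exact IA.iInf_not_memW_natW_zero_mem_Sig _
  · exact IA.Sig_upward hθ (le_iInf fun x => hθle x.1)

theorem stmt16 {A : Type u} [CompleteLattice A] (IA : ImplicativeAlgebra A)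
    (κ : Cardinal.{u}) (hκ : κ.IsInaccessible) (hA : Cardinal.mk A < κ) :
    IA.interp κ
      (SetFormula.ex
        ((SetFormula.ex ((SetFormula.mem 1 0).and
            (SetFormula.all ((SetFormula.mem 2 1).imp SetFormula.bot)))).and
         (SetFormula.all ((SetFormula.mem 1 0).imp
            (SetFormula.ex ((SetFormula.mem 2 0).and
              ((SetFormula.all ((SetFormula.mem 3 1).imp (SetFormula.mem 3 2))).and
               ((SetFormula.mem 1 2).and
                (SetFormula.all ((SetFormula.mem 3 2).imp
                  ((SetFormula.mem 3 1).or (SetFormula.eq 3 1))))))))))))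
      (fun i => i.elim0) ∈ IA.Sig :=
  stmt16_general IA κ hκ
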